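/- (Proposition 2) Assume the ball-constraint assumption with bounds ℓ, u, and assume (OPF) is feasible. Let α* ∈ ℝ^K be an optimal solution of (DSDP), i.e. α*_k ≥ 0 for all k, S* := C + Σ_{k∈K} α*_k A_k is positive semidefinite, and Σ_{k∈K} −b_k α*_k equals the supremum of the (DSDP) objective over its feasible set. Then the optimal value of (SDP) equals the optimal value of (ŌPF_{S*}), and for every real symmetric positive semidefinite 2n×2n matrix S, the optimal value of (ŌPF_S) is at most the optimal value of (SDP); that is, S* maximizes v(ŌPF_S) over positive semidefinite S and v(SDP) = max_{S⪰0} v(ŌPF_S) = v(ŌPF_{S*}). -/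

import Mathlib

open Matrix

noncomputable section

/-- Trace inner product ⟨A,B⟩ = trace(AB). -/
def ip {m : ℕ} (A B : Matrix (Fin m) (Fin m) ℝ) : ℝ := (A * B).trace

/-- Quadratic form xᵀ A x. -/
def qf {m : ℕ} (A : Matrix (Fin m) (Fin m) ℝ) (x : Fin m → ℝ) : ℝ := x ⬝ᵥ A.mulVec x

/-- Index of the real part of the voltage at node `i` among the `2n` coordinates. -/
def idx1 (n : ℕ) (i : Fin n) : Fin (2 * n) := ⟨i.val, by have := i.isLt; omega⟩

/-- Index of the imaginary part of the voltage at node `i` among the `2n` coordinates. -/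
def idx2 (n : ℕ) (i : Fin n) : Fin (2 * n) := ⟨i.val + n, by have := i.isLt; omega⟩

/-- The matrix of the ball constraint at node `i`: diagonal, with ones exactly in
positions `(i,i)` and `(i+n, i+n)`. -/
def ballMat (n : ℕ) (i : Fin n) : Matrix (Fin (2 * n)) (Fin (2 * n)) ℝ :=
  Matrix.diagonal (fun j => if j = idx1 n i ∨ j = idx2 n i then 1 else 0)

/-- The four McCormick inequalities relating `Y i j` to `x i`, `x j` and bounds `l, u`,
for all pairs of indices `i ≤ j`. -/
def mcCormick {m : ℕ} (l u x : Fin m → ℝ) (Y : Matrix (Fin m) (Fin m) ℝ) : Prop :=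
  ∀ i j : Fin m, i ≤ j →
    Y i j ≤ u j * x i + l i * x j - l i * u j ∧
    Y i j ≤ l j * x i + u i * x j - u i * l j ∧
    Y i j ≥ u j * x i + u i * x j - u i * u j ∧
    Y i j ≥ l j * x i + l i * x j - l i * l j

/-- The set of objective values of the relaxed reformulation (ŌPF_S). -/
def OPFSbarVals {n : ℕ} {K : Type} [Fintype K]
    (C : Matrix (Fin (2 * n)) (Fin (2 * n)) ℝ)
    (A : K → Matrix (Fin (2 * n)) (Fin (2 * n)) ℝ) (b : K → ℝ)
    (l u : Fin (2 * n) → ℝ)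
    (S : Matrix (Fin (2 * n)) (Fin (2 * n)) ℝ) : Set ℝ :=
  {v : ℝ | ∃ (x : Fin (2 * n) → ℝ) (Y : Matrix (Fin (2 * n)) (Fin (2 * n)) ℝ),
      Y.IsSymm ∧ (∀ k, ip (A k) Y ≤ b k) ∧ mcCormick l u x Y ∧
      v = qf S x + ip (C - S) Y}

/-! Weak duality bounds every value of (ŌPF_{S*}) below by the dual value of `α*`, and every
SDP-feasible `X` gives the (ŌPF_S)-feasible point `(0, X)` of value `⟨C - S, X⟩ ≤ ⟨C, X⟩`: the ball
constraints force `|X i j| ≤ u i * u j`, which is exactly the McCormick system at `x = 0`.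
What remains is the absence of a duality gap between (SDP) and (DSDP). The ball constraints add up
to `trace X ≤ Σ V_i²`, so Hahn–Banach separation over the compact convex set
`{X ⪰ 0, trace X ≤ T}` yields multipliers `α` for which `⟨C + Σ α_k A_k, X⟩` is bounded below on
that set. Then `C + Σ α_k A_k + θ I ⪰ 0` for some `θ ≥ 0`, and `θ I` is absorbed by raising the
multipliers of the ball constraints. -/


section TracePairing

variable {m : ℕ}

lemma ip_eq_sum (M X : Matrix (Fin m) (Fin m) ℝ) : ip M X = ∑ i, ∑ j, M i j * X j i := by
  simp [ip, Matrix.trace, Matrix.mul_apply]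

lemma ip_add_left (M N X : Matrix (Fin m) (Fin m) ℝ) : ip (M + N) X = ip M X + ip N X := by
  simp [ip, Matrix.add_mul]

lemma ip_sub_left (M N X : Matrix (Fin m) (Fin m) ℝ) : ip (M - N) X = ip M X - ip N X := by
  simp [ip, Matrix.sub_mul]

lemma ip_one_left (X : Matrix (Fin m) (Fin m) ℝ) : ip 1 X = X.trace := by
  simp [ip]

lemma ip_sum_smul_left {K : Type*} [Fintype K] (α : K → ℝ) (A : K → Matrix (Fin m) (Fin m) ℝ)
    (X : Matrix (Fin m) (Fin m) ℝ) : ip (∑ k, α k • A k) X = ∑ k, α k * ip (A k) X := by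
  simp [ip, Finset.sum_mul, Matrix.trace_sum]

lemma ip_smul_right (M X : Matrix (Fin m) (Fin m) ℝ) (c : ℝ) : ip M (c • X) = c * ip M X := by
  simp [ip]

lemma ip_vecMulVec_self (M : Matrix (Fin m) (Fin m) ℝ) (v : Fin m → ℝ) :
    ip M (vecMulVec v v) = qf M v := by
  simp only [ip_eq_sum, qf, dotProduct, mulVec, vecMulVec_apply, Finset.mul_sum]
  exact Finset.sum_congr rfl fun i _ => Finset.sum_congr rfl fun j _ => by ring

lemma posSemidef_vecMulVec_self (v : Fin m → ℝ) : (vecMulVec v v).PosSemidef := by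
  simpa using posSemidef_vecMulVec_self_star v

lemma ip_nonneg {M X : Matrix (Fin m) (Fin m) ℝ} (hM : M.PosSemidef) (hX : X.PosSemidef) :
    0 ≤ ip M X := by
  -- `ip M X` is the sum of all entries of `M ⊙ X`, which is PSD by the Schur product theorem.
  refine ((hM.hadamard hX).dotProduct_mulVec_nonneg 1).trans_eq ?_
  simp only [ip_eq_sum, dotProduct, mulVec, hadamard_apply, star_trivial, Pi.one_apply, one_mul,
    mul_one]
  exact Finset.sum_congr rfl fun i _ => Finset.sum_congr rfl fun j _ => by
    rw [← hX.isHermitian.apply i j, star_trivial]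

lemma neg_sum_abs_mul_le_ip (M : Matrix (Fin m) (Fin m) ℝ) {Y B : Matrix (Fin m) (Fin m) ℝ}
    (hY : ∀ i j, |Y i j| ≤ B i j) : -∑ i, ∑ j, |M i j| * B j i ≤ ip M Y := by
  rw [ip_eq_sum, ← Finset.sum_neg_distrib]
  refine Finset.sum_le_sum fun i _ => ?_
  rw [← Finset.sum_neg_distrib]
  refine Finset.sum_le_sum fun j _ => ?_
  calc -(|M i j| * B j i) ≤ -(|M i j| * |Y j i|) :=
        neg_le_neg (mul_le_mul_of_nonneg_left (hY j i) (abs_nonneg _))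
    _ ≤ M i j * Y j i := by rw [← abs_mul]; exact neg_abs_le _

lemma sum_sum_ite_smul_eq_sum_comp {K ι M : Type*} [Fintype K] [Fintype ι] [DecidableEq K]
    [AddCommMonoid M] [Module ℝ M] (e : ι → K) (A : K → M) :
    ∑ k, (∑ i, if k = e i then (1 : ℝ) else 0) • A k = ∑ i, A (e i) := by
  simp only [Finset.sum_smul, ite_smul, one_smul, zero_smul]
  rw [Finset.sum_comm]
  simp

end TracePairing

section PosSemidefEntries

variable {m : ℕ} {X : Matrix (Fin m) (Fin m) ℝ}

lemma qf_smul_single_add_single (X : Matrix (Fin m) (Fin m) ℝ) (i j : Fin m) (t : ℝ) :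
    qf X (t • Pi.single i 1 + Pi.single j 1) = X i i * (t * t) + (X i j + X j i) * t + X j j := by
  simp only [qf, mulVec_add, mulVec_smul, add_dotProduct, dotProduct_add, smul_dotProduct,
    dotProduct_smul, mulVec_single_one, single_one_dotProduct, smul_eq_mul, col_apply]
  ring

lemma Matrix.PosSemidef.qf_nonneg (hX : X.PosSemidef) (v : Fin m → ℝ) : 0 ≤ qf X v := by
  simpa [qf] using hX.dotProduct_mulVec_nonneg v

lemma Matrix.PosSemidef.sq_apply_le (hX : X.PosSemidef) (i j : Fin m) :
    X i j ^ 2 ≤ X i i * X j j := by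
  have hsymm : X j i = X i j := by simpa using hX.isHermitian.apply i j
  have h := discrim_le_zero fun t => qf_smul_single_add_single X i j t ▸ hX.qf_nonneg _
  rw [discrim, hsymm] at h
  nlinarith

lemma Matrix.PosSemidef.abs_apply_le (hX : X.PosSemidef) {i j : Fin m} {a c : ℝ}
    (ha : 0 ≤ a) (hc : 0 ≤ c) (hi : X i i ≤ a ^ 2) (hj : X j j ≤ c ^ 2) : |X i j| ≤ a * c := by
  refine abs_le_of_sq_le_sq' ?_ (mul_nonneg ha hc) |>.elim (fun h1 h2 => abs_le.2 ⟨h1, h2⟩)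
  calc X i j ^ 2 ≤ X i i * X j j := hX.sq_apply_le i j
    _ ≤ a ^ 2 * c ^ 2 := mul_le_mul hi hj hX.diag_nonneg (sq_nonneg a)
    _ = (a * c) ^ 2 := by ring

lemma Matrix.PosSemidef.apply_le_trace (hX : X.PosSemidef) (i : Fin m) : X i i ≤ X.trace :=
  Finset.single_le_sum (f := fun j => X j j) (fun _ _ => hX.diag_nonneg) (Finset.mem_univ i)

end PosSemidefEntries

section TraceBall

variable {m : ℕ}

lemma isClosed_setOf_posSemidef : IsClosed {X : Matrix (Fin m) (Fin m) ℝ | X.PosSemidef} := by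
  simp only [posSemidef_iff_dotProduct_mulVec, Set.ofPred_and, Set.ofPred_forall, IsHermitian]
  exact (isClosed_eq (continuous_id.matrix_conjTranspose) continuous_id).inter
    (isClosed_iInter fun v => isClosed_le continuous_const
      (continuous_const.dotProduct (continuous_id.matrix_mulVec continuous_const)))

lemma isCompact_setOf_posSemidef_trace_le (T : ℝ) :
    IsCompact {X : Matrix (Fin m) (Fin m) ℝ | X.PosSemidef ∧ X.trace ≤ T} := by
  refine (isCompact_univ_pi fun _ => isCompact_univ_pi fun _ => isCompact_Icc (a := -T) (b := T))
    |>.of_isClosed_subset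
      (isClosed_setOf_posSemidef.inter (isClosed_le continuous_id.matrix_trace continuous_const)) ?_
  rintro X ⟨hX, hT⟩ i - j -
  have hTi := (hX.apply_le_trace i).trans hT
  have hTj := (hX.apply_le_trace j).trans hT
  have hT0 : 0 ≤ T := (hX.diag_nonneg).trans hTi
  refine abs_le.1 ((hX.abs_apply_le (Real.sqrt_nonneg T) (Real.sqrt_nonneg T) ?_ ?_).trans_eq ?_)
  all_goals simp [Real.sq_sqrt hT0, Real.mul_self_sqrt hT0, hTi, hTj]

lemma convex_setOf_posSemidef_trace_le (T : ℝ) :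
    Convex ℝ {X : Matrix (Fin m) (Fin m) ℝ | X.PosSemidef ∧ X.trace ≤ T} := by
  rintro X ⟨hX, hXT⟩ Y ⟨hY, hYT⟩ a c ha hc hac
  refine ⟨(hX.smul ha).add (hY.smul hc), ?_⟩
  rw [trace_add, trace_smul, trace_smul, smul_eq_mul, smul_eq_mul]
  calc a * X.trace + c * Y.trace ≤ a * T + c * T := by gcongr
    _ = T := by rw [← add_mul, hac, one_mul]

end TraceBall

section Lagrange

lemma LinearMap.nonneg_of_forall_le_lt {F : Type*} [AddCommGroup F] [PartialOrder F]
    [IsOrderedAddMonoid F] [Module ℝ F] [PosSMulMono ℝ F] (f : F →ₗ[ℝ] ℝ) {q : F} {u : ℝ}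
    (hf : ∀ y ≤ q, f y < u) {y : F} (hy : 0 ≤ y) : 0 ≤ f y := by
  by_contra! hy'
  have hq := hf q le_rfl
  set t := (u - f q) / -f y
  have ht : t * f y = f q - u := by
    rw [div_mul_eq_mul_div, div_eq_iff (by linarith)]; ring
  have := hf (q - t • y) (sub_le_self _ (smul_nonneg (div_nonneg (by linarith) (by linarith)) hy))
  rw [map_sub, map_smul, smul_eq_mul] at this
  linarith

variable {K : Type*} [Fintype K]

lemma LinearMap.apply_prod_pi_eq_sum [DecidableEq K] (f : ((K → ℝ) × ℝ) →ₗ[ℝ] ℝ) (z : K → ℝ)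
    (w : ℝ) : f (z, w) = ∑ k, z k * f (Pi.single k 1, 0) + w * f (0, 1) := by
  have hzw : (z, w) = LinearMap.inl ℝ _ ℝ z + w • (0, 1) := by ext <;> simp
  rw [hzw, map_add, map_smul, ← LinearMap.comp_apply, LinearMap.pi_apply_eq_sum_univ]
  have hsingle : ∀ k : K, (fun j : K => if k = j then (1 : ℝ) else 0) = Pi.single k 1 := fun k => by
    funext j; simp [Pi.single_apply, eq_comm]
  simp [hsingle]

theorem exists_lagrangeMultipliers_of_isCompact {E : Type*} [AddCommGroup E] [Module ℝ E]
    [TopologicalSpace E] [IsTopologicalAddGroup E] [ContinuousSMul ℝ E] {s : Set E}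
    (hs : IsCompact s) (hsc : Convex ℝ s) (c : E →L[ℝ] ℝ) (a : K → E →L[ℝ] ℝ) (b : K → ℝ)
    {p : ℝ} {x₀ : E} (hx₀ : x₀ ∈ s) (hx₀b : ∀ k, a k x₀ ≤ b k)
    (hp : ∀ x ∈ s, (∀ k, a k x ≤ b k) → p < c x) :
    ∃ α : K → ℝ, (∀ k, 0 ≤ α k) ∧ ∀ x ∈ s, p + ∑ k, α k * b k < c x + ∑ k, α k * a k x := by
  classical
  let Φ : E →L[ℝ] (K → ℝ) × ℝ := (ContinuousLinearMap.pi a).prod c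
  have hdisj : Disjoint (Set.Iic (b, p)) (Φ '' s) := by
    refine Set.disjoint_left.2 ?_
    rintro _ hle ⟨x, hx, rfl⟩
    exact (hp x hx hle.1).not_ge hle.2
  obtain ⟨f, u, v, hfu, huv, hvf⟩ := geometric_hahn_banach_closed_compact (convex_Iic _)
    isClosed_Iic (hsc.linear_image Φ.toLinearMap) (hs.image Φ.continuous) hdisj
  have hvf' : ∀ x ∈ s, v < f (Φ x) := fun x hx => hvf _ ⟨x, hx, rfl⟩
  have hf := LinearMap.apply_prod_pi_eq_sum f.toLinearMap
  simp only [ContinuousLinearMap.coe_coe] at hf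
  set l : K → ℝ := fun k => f (Pi.single k 1, 0)
  set μ := f (0, 1)
  have hmono : ∀ y, 0 ≤ y → 0 ≤ f y := fun y hy =>
    f.toLinearMap.nonneg_of_forall_le_lt hfu hy
  have hl : ∀ k, 0 ≤ l k := fun k => hmono _ ⟨Pi.single_nonneg.2 zero_le_one, le_rfl⟩
  have hΦ : ∀ x, f (Φ x) = ∑ k, a k x * l k + c x * μ := fun x => hf _ _
  have hbp : f (b, p) = ∑ k, b k * l k + p * μ := hf _ _
  have hμ : 0 < μ := by
    -- If `μ = 0`, feasibility of `x₀` forces `f (Φ x₀) ≤ f (b, p)`.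
    refine (hmono (0, 1) ⟨le_rfl, zero_le_one⟩).lt_of_ne' fun hμ0 => ?_
    have h₀ := (hfu _ (Set.mem_Iic.2 le_rfl)).trans (huv.trans (hvf' x₀ hx₀))
    have hsum : ∑ k, a k x₀ * l k ≤ ∑ k, b k * l k :=
      Finset.sum_le_sum fun k _ => mul_le_mul_of_nonneg_right (hx₀b k) (hl k)
    rw [hΦ, hbp, show μ = 0 from hμ0] at h₀
    linarith
  refine ⟨fun k => l k / μ, fun k => div_nonneg (hl k) hμ.le, fun x hx => ?_⟩
  have h := (hfu _ (Set.mem_Iic.2 le_rfl)).trans (huv.trans (hvf' x hx))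
  rw [hΦ, hbp] at h
  have key := div_lt_div_of_pos_right h hμ
  simp only [add_div, mul_div_cancel_right₀ _ hμ.ne', Finset.sum_div] at key
  have hcomm : ∀ k y, l k / μ * y = y * l k / μ := fun _ _ => by ring
  simp only [hcomm]
  linarith

end Lagrange

section Duality

variable {m : ℕ} {K : Type*} [Fintype K]

def sdpVals (C : Matrix (Fin m) (Fin m) ℝ) (A : K → Matrix (Fin m) (Fin m) ℝ) (b : K → ℝ) :
    Set ℝ :=
  {v | ∃ X : Matrix (Fin m) (Fin m) ℝ, X.IsSymm ∧ X.PosSemidef ∧ (∀ k, ip (A k) X ≤ b k) ∧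
    v = ip C X}

def dualVals (C : Matrix (Fin m) (Fin m) ℝ) (A : K → Matrix (Fin m) (Fin m) ℝ) (b : K → ℝ) :
    Set ℝ :=
  {v | ∃ α : K → ℝ, (∀ k, 0 ≤ α k) ∧ (C + ∑ k, α k • A k).PosSemidef ∧ v = ∑ k, -(b k) * α k}

def ipCLM (M : Matrix (Fin m) (Fin m) ℝ) : Matrix (Fin m) (Fin m) ℝ →L[ℝ] ℝ :=
  LinearMap.toContinuousLinearMap (traceLinearMap (Fin m) ℝ ℝ ∘ₗ LinearMap.mulLeft ℝ M)

@[simp]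
lemma ipCLM_apply (M X : Matrix (Fin m) (Fin m) ℝ) : ipCLM M X = ip M X := rfl

lemma isSymm_add_sum_smul {C : Matrix (Fin m) (Fin m) ℝ} (hC : C.IsSymm)
    {A : K → Matrix (Fin m) (Fin m) ℝ} (hA : ∀ k, (A k).IsSymm) (α : K → ℝ) :
    (C + ∑ k, α k • A k).IsSymm :=
  hC.add <| by simp [IsSymm, transpose_sum, fun k => (hA k).eq]

lemma dual_obj_le_ip {C : Matrix (Fin m) (Fin m) ℝ} {A : K → Matrix (Fin m) (Fin m) ℝ}
    {b α : K → ℝ} {X : Matrix (Fin m) (Fin m) ℝ} (hα : ∀ k, 0 ≤ α k)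
    (hS : (C + ∑ k, α k • A k).PosSemidef) (hX : X.PosSemidef) (hXb : ∀ k, ip (A k) X ≤ b k) :
    ∑ k, -(b k) * α k ≤ ip C X := by
  have h₀ := ip_nonneg hS hX
  have hsum : ∑ k, α k * ip (A k) X ≤ ∑ k, b k * α k :=
    Finset.sum_le_sum fun k _ => (mul_le_mul_of_nonneg_left (hXb k) (hα k)).trans_eq (mul_comm _ _)
  rw [ip_add_left, ip_sum_smul_left] at h₀
  simp only [neg_mul, Finset.sum_neg_distrib]
  linarith

lemma posSemidef_sub_smul_one_of_forall_lt {M : Matrix (Fin m) (Fin m) ℝ} (hM : M.IsSymm)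
    {T c : ℝ} (hT : 0 < T) (h : ∀ X : Matrix (Fin m) (Fin m) ℝ, X.PosSemidef → X.trace ≤ T →
      c < ip M X) :
    (M - (c / T) • 1).PosSemidef := by
  refine .of_dotProduct_mulVec_nonneg (isHermitian_iff_isSymm.2 (hM.sub (isSymm_one.smul _)))
    fun v => ?_
  rcases eq_or_ne v 0 with rfl | hv
  · simp
  have hvv : 0 < v ⬝ᵥ v := by simpa using dotProduct_self_star_pos_iff.2 hv
  have hX := h ((T / (v ⬝ᵥ v)) • vecMulVec v v)
    ((posSemidef_vecMulVec_self v).smul (by positivity))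
    (by rw [trace_smul, trace_vecMulVec, smul_eq_mul, div_mul_cancel₀ _ hvv.ne'])
  rw [ip_smul_right, ip_vecMulVec_self, div_mul_eq_mul_div, lt_div_iff₀ hvv] at hX
  have hgoal : star v ⬝ᵥ (M - (c / T) • 1) *ᵥ v = qf M v - c / T * (v ⬝ᵥ v) := by
    simp [qf, sub_mulVec, dotProduct_sub, smul_mulVec]
  rw [hgoal, sub_nonneg, div_mul_eq_mul_div, div_le_iff₀ hT]
  linarith

variable {C : Matrix (Fin m) (Fin m) ℝ} {A : K → Matrix (Fin m) (Fin m) ℝ} {b : K → ℝ}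

theorem exists_dual_ge_of_forall_lt (hC : C.IsSymm) (hA : ∀ k, (A k).IsSymm) {β : K → ℝ}
    (hβ : ∀ k, 0 ≤ β k) (hβA : ∑ k, β k • A k = 1) {X₀ : Matrix (Fin m) (Fin m) ℝ}
    (hX₀ : X₀.PosSemidef) (hX₀b : ∀ k, ip (A k) X₀ ≤ b k) {p : ℝ}
    (hp : ∀ X : Matrix (Fin m) (Fin m) ℝ, X.PosSemidef → (∀ k, ip (A k) X ≤ b k) → p < ip C X) :
    ∃ α : K → ℝ, (∀ k, 0 ≤ α k) ∧ (C + ∑ k, α k • A k).PosSemidef ∧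
      p ≤ ∑ k, -(b k) * α k := by
  set R := ∑ k, β k * b k
  -- Any `T > 0` with `R ≤ T` works: `R` bounds the trace of every feasible `X`.
  set T := |R| + 1
  have hT : 0 < T := by positivity
  have hRT : R ≤ T := (le_abs_self R).trans (lt_add_one _).le
  have htrace : X₀.trace ≤ R := by
    rw [← ip_one_left, ← hβA, ip_sum_smul_left]
    exact Finset.sum_le_sum fun k _ => mul_le_mul_of_nonneg_left (hX₀b k) (hβ k)
  obtain ⟨α, hα, hlag⟩ := exists_lagrangeMultipliers_of_isCompact
    (isCompact_setOf_posSemidef_trace_le T) (convex_setOf_posSemidef_trace_le T) (ipCLM C)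
    (fun k => ipCLM (A k)) b ⟨hX₀, htrace.trans hRT⟩ hX₀b fun X hX hXb => hp X hX.1 hXb
  set c := p + ∑ k, α k * b k
  have hM : ∀ X : Matrix (Fin m) (Fin m) ℝ, X.PosSemidef → X.trace ≤ T →
      c < ip (C + ∑ k, α k • A k) X := fun X hX hXT => by
    simpa [ip_add_left, ip_sum_smul_left] using hlag X ⟨hX, hXT⟩
  have hc : c < 0 := by simpa [ip] using hM 0 .zero (by simpa using hT.le)
  have hcT : c / T < 0 := div_neg_of_neg_of_pos hc hT
  refine ⟨fun k => α k - c / T * β k, fun k => ?_, ?_, ?_⟩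
  · nlinarith [hα k, hβ k]
  · have hS : C + ∑ k, (α k - c / T * β k) • A k = C + ∑ k, α k • A k - (c / T) • 1 := by
      simp only [sub_smul, Finset.sum_sub_distrib, mul_smul, ← Finset.smul_sum, hβA]
      abel
    rw [hS]
    exact posSemidef_sub_smul_one_of_forall_lt (isSymm_add_sum_smul hC hA α) hT hM
  · have hcR : c ≤ c / T * R := by
      rw [div_mul_eq_mul_div, le_div_iff₀ hT]
      nlinarith
    simp only [mul_sub, Finset.sum_sub_distrib, neg_mul, Finset.sum_neg_distrib]
    have hβb : ∑ k, b k * (c / T * β k) = c / T * R := by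
      rw [Finset.mul_sum]; exact Finset.sum_congr rfl fun k _ => by ring
    have hαb : ∑ k, b k * α k = ∑ k, α k * b k := Finset.sum_congr rfl fun k _ => mul_comm _ _
    rw [hβb, hαb]
    linarith

theorem csInf_sdpVals_eq_csSup_dualVals (hC : C.IsSymm) (hA : ∀ k, (A k).IsSymm) {β : K → ℝ}
    (hβ : ∀ k, 0 ≤ β k) (hβA : ∑ k, β k • A k = 1) {X₀ : Matrix (Fin m) (Fin m) ℝ}
    (hX₀ : X₀.PosSemidef) (hX₀b : ∀ k, ip (A k) X₀ ≤ b k) {α₀ : K → ℝ} (hα₀ : ∀ k, 0 ≤ α₀ k)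
    (hS₀ : (C + ∑ k, α₀ k • A k).PosSemidef) :
    sInf (sdpVals C A b) = sSup (dualVals C A b) := by
  have hweak : ∀ v ∈ dualVals C A b, ∀ w ∈ sdpVals C A b, v ≤ w := by
    rintro _ ⟨α, hα, hS, rfl⟩ _ ⟨X, -, hX, hXb, rfl⟩
    exact dual_obj_le_ip hα hS hX hXb
  have hX₀mem : ip C X₀ ∈ sdpVals C A b :=
    ⟨X₀, isHermitian_iff_isSymm.1 hX₀.isHermitian, hX₀, hX₀b, rfl⟩
  have hα₀mem : ∑ k, -(b k) * α₀ k ∈ dualVals C A b := ⟨α₀, hα₀, hS₀, rfl⟩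
  refine le_antisymm ?_ (csSup_le ⟨_, hα₀mem⟩ fun v hv => le_csInf ⟨_, hX₀mem⟩ (hweak v hv))
  by_contra! hgap
  obtain ⟨α, hα, hS, hp⟩ := exists_dual_ge_of_forall_lt (b := b)
    (p := (sSup (dualVals C A b) + sInf (sdpVals C A b)) / 2) hC hA hβ hβA hX₀ hX₀b
    fun X hX hXb => by
      have := csInf_le ⟨_, hweak _ hα₀mem⟩
        (⟨X, isHermitian_iff_isSymm.1 hX.isHermitian, hX, hXb, rfl⟩ : ip C X ∈ sdpVals C A b)
      linarith
  have := le_csSup ⟨_, fun v hv => hweak v hv _ hX₀mem⟩ (⟨α, hα, hS, rfl⟩ :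
    ∑ k, -(b k) * α k ∈ dualVals C A b)
  linarith

end Duality

section McCormick

variable {m : ℕ} {u x : Fin m → ℝ} {Y : Matrix (Fin m) (Fin m) ℝ}

lemma mcCormick_neg_zero (h : ∀ i j, |Y i j| ≤ u i * u j) : mcCormick (-u) u 0 Y := by
  intro i j _
  have := abs_le.1 (h i j)
  simp only [Pi.neg_apply, Pi.zero_apply, mul_zero, add_zero, zero_sub, neg_mul, neg_neg,
    mul_neg, ge_iff_le]
  refine ⟨?_, ?_, ?_, ?_⟩ <;> linarith

lemma abs_le_of_mcCormick (hu : ∀ i, 0 < u i) (h : mcCormick (-u) u x Y) (i : Fin m) :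
    |x i| ≤ u i := by
  obtain ⟨h₁, -, h₃, h₄⟩ := h i i le_rfl
  simp only [Pi.neg_apply] at h₁ h₃ h₄
  refine abs_le.2 ⟨?_, ?_⟩ <;> nlinarith [hu i]

lemma abs_apply_le_of_mcCormick (hu : ∀ i, 0 < u i) (hY : Y.IsSymm) (h : mcCormick (-u) u x Y)
    (i j : Fin m) : |Y i j| ≤ 3 * (u i * u j) := by
  wlog hij : i ≤ j generalizing i j
  · rw [← hY.apply i j, mul_comm (u i)]
    exact this j i (le_of_not_ge hij)
  obtain ⟨h₁, h₂, h₃, h₄⟩ := h i j hij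
  simp only [Pi.neg_apply] at h₁ h₂ h₃ h₄
  have hxi := abs_le.1 (abs_le_of_mcCormick hu h i)
  have hxj := abs_le.1 (abs_le_of_mcCormick hu h j)
  have := hu i
  have := hu j
  refine abs_le.2 ⟨?_, ?_⟩ <;> nlinarith

end McCormick

section RelaxedReformulation

variable {n : ℕ} {K : Type} [Fintype K] {C : Matrix (Fin (2 * n)) (Fin (2 * n)) ℝ}
  {A : K → Matrix (Fin (2 * n)) (Fin (2 * n)) ℝ} {b : K → ℝ}

lemma bddBelow_OPFSbarVals {u : Fin (2 * n) → ℝ} (hu : ∀ i, 0 < u i)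
    {S : Matrix (Fin (2 * n)) (Fin (2 * n)) ℝ} (hS : S.PosSemidef) :
    BddBelow (OPFSbarVals C A b (-u) u S) := by
  refine ⟨-∑ i, ∑ j, |(C - S) i j| * (3 * (u j * u i)), ?_⟩
  rintro _ ⟨x, Y, hYs, -, hmc, rfl⟩
  have := neg_sum_abs_mul_le_ip (C - S) (B := Matrix.of fun i j => 3 * (u i * u j))
    (abs_apply_le_of_mcCormick hu hYs hmc)
  simp only [Matrix.of_apply] at this
  linarith [hS.qf_nonneg x]

theorem csInf_OPFSbarVals_le_csInf_sdpVals {u : Fin (2 * n) → ℝ} (hu : ∀ i, 0 < u i)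
    (hbox : ∀ X : Matrix (Fin (2 * n)) (Fin (2 * n)) ℝ, X.PosSemidef →
      (∀ k, ip (A k) X ≤ b k) → ∀ i j, |X i j| ≤ u i * u j)
    (hne : (sdpVals C A b).Nonempty) {S : Matrix (Fin (2 * n)) (Fin (2 * n)) ℝ}
    (hS : S.PosSemidef) :
    sInf (OPFSbarVals C A b (-u) u S) ≤ sInf (sdpVals C A b) := by
  refine le_csInf hne ?_
  rintro _ ⟨X, hXs, hX, hXb, rfl⟩
  calc sInf (OPFSbarVals C A b (-u) u S) ≤ qf S 0 + ip (C - S) X :=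
        csInf_le (bddBelow_OPFSbarVals hu hS)
          ⟨0, X, hXs, hXb, mcCormick_neg_zero (hbox X hX hXb), rfl⟩
    _ ≤ ip C X := by
        rw [ip_sub_left]
        linarith [ip_nonneg hS hX, (by simp [qf] : qf S 0 = 0)]

lemma dual_obj_le_of_mem_OPFSbarVals {l u : Fin (2 * n) → ℝ} {α : K → ℝ} (hα : ∀ k, 0 ≤ α k)
    (hS : (C + ∑ k, α k • A k).PosSemidef) {v : ℝ}
    (hv : v ∈ OPFSbarVals C A b l u (C + ∑ k, α k • A k)) :
    ∑ k, -(b k) * α k ≤ v := by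
  obtain ⟨x, Y, -, hYb, -, rfl⟩ := hv
  have hsum : ∑ k, α k * ip (A k) Y ≤ ∑ k, b k * α k :=
    Finset.sum_le_sum fun k _ => (mul_le_mul_of_nonneg_left (hYb k) (hα k)).trans_eq (mul_comm _ _)
  rw [ip_sub_left, ip_add_left, ip_sum_smul_left]
  simp only [neg_mul, Finset.sum_neg_distrib]
  linarith [hS.qf_nonneg x]

end RelaxedReformulation

section BallConstraints

variable {n : ℕ}

lemma exists_idx_eq (j : Fin (2 * n)) : ∃ i, j = idx1 n i ∨ j = idx2 n i := by
  by_cases h : (j : ℕ) < n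
  · exact ⟨⟨j, h⟩, Or.inl (Fin.ext rfl)⟩
  · exact ⟨⟨j - n, by omega⟩, Or.inr (Fin.ext (by simp only [idx2]; omega))⟩

lemma idx_eq_iff {i₀ : Fin n} {j : Fin (2 * n)} (hj : j = idx1 n i₀ ∨ j = idx2 n i₀) (i : Fin n) :
    (j = idx1 n i ∨ j = idx2 n i) ↔ i = i₀ := by
  rcases hj with rfl | rfl <;> simp only [Fin.ext_iff, idx1, idx2] <;> omega

lemma sum_ballMat : ∑ i, ballMat n i = 1 := by
  ext j k
  obtain ⟨i₀, hj⟩ := exists_idx_eq j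
  simp only [ballMat, Matrix.sum_apply, diagonal_apply, one_apply, idx_eq_iff hj]
  split_ifs <;> simp

lemma apply_le_ip_ballMat {X : Matrix (Fin (2 * n)) (Fin (2 * n)) ℝ} (hX : X.PosSemidef)
    {i : Fin n} {j : Fin (2 * n)} (hj : j = idx1 n i ∨ j = idx2 n i) :
    X j j ≤ ip (ballMat n i) X := by
  classical
  have hip : ip (ballMat n i) X = ∑ j', if j' = idx1 n i ∨ j' = idx2 n i then X j' j' else 0 := by
    simp [ip, ballMat, trace, diagonal_mul]
  rw [hip]
  refine (Finset.single_le_sum (f := fun j' => if j' = idx1 n i ∨ j' = idx2 n i then X j' j' else 0)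
    (fun j' _ => ?_) (Finset.mem_univ j)).trans_eq' (by simp [hj])
  split_ifs
  exacts [hX.diag_nonneg, le_rfl]

variable {K : Type*} {A : K → Matrix (Fin (2 * n)) (Fin (2 * n)) ℝ} {b : K → ℝ} {e : Fin n → K}
  {V : Fin n → ℝ} {l u : Fin (2 * n) → ℝ}

lemma pos_and_eq_neg_of_ballBounds (hV : ∀ i, 0 < V i)
    (hl : ∀ i, l (idx1 n i) = -(V i) ∧ l (idx2 n i) = -(V i))
    (hu : ∀ i, u (idx1 n i) = V i ∧ u (idx2 n i) = V i) : (∀ j, 0 < u j) ∧ l = -u := by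
  refine ⟨fun j => ?_, funext fun j => ?_⟩ <;> obtain ⟨i, rfl | rfl⟩ := exists_idx_eq j
  exacts [(hu i).1 ▸ hV i, (hu i).2 ▸ hV i, by simp [(hl i).1, (hu i).1],
    by simp [(hl i).2, (hu i).2]]

lemma diag_le_sq_of_ball (hball : ∀ i, A (e i) = ballMat n i) (hb : ∀ i, b (e i) = V i ^ 2)
    (hu : ∀ i, u (idx1 n i) = V i ∧ u (idx2 n i) = V i)
    {X : Matrix (Fin (2 * n)) (Fin (2 * n)) ℝ} (hX : X.PosSemidef) (hXb : ∀ k, ip (A k) X ≤ b k)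
    (j : Fin (2 * n)) : X j j ≤ u j ^ 2 := by
  obtain ⟨i, hj⟩ := exists_idx_eq j
  have huj : u j = V i := by rcases hj with rfl | rfl; exacts [(hu i).1, (hu i).2]
  calc X j j ≤ ip (A (e i)) X := hball i ▸ apply_le_ip_ballMat hX hj
    _ ≤ u j ^ 2 := by rw [huj, ← hb i]; exact hXb (e i)

end BallConstraints

theorem stmt_12_general {n : ℕ} {K : Type} [Fintype K]
    (C : Matrix (Fin (2 * n)) (Fin (2 * n)) ℝ) (hC : C.IsSymm)
    (A : K → Matrix (Fin (2 * n)) (Fin (2 * n)) ℝ) (hA : ∀ k, (A k).IsSymm)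
    (b : K → ℝ)
    (e : Fin n → K)
    (V : Fin n → ℝ) (hV : ∀ i, 0 < V i)
    (hball : ∀ i : Fin n, A (e i) = ballMat n i)
    (hb : ∀ i : Fin n, b (e i) = (V i) ^ 2)
    (l u : Fin (2 * n) → ℝ)
    (hl : ∀ i : Fin n, l (idx1 n i) = -(V i) ∧ l (idx2 n i) = -(V i))
    (hu : ∀ i : Fin n, u (idx1 n i) = V i ∧ u (idx2 n i) = V i)
    (hfeas : ∃ x : Fin (2 * n) → ℝ, ∀ k, qf (A k) x ≤ b k)
    (αstar : K → ℝ) (hαstar : ∀ k, 0 ≤ αstar k)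
    (hSstar : (C + ∑ k, αstar k • A k).PosSemidef)
    (hopt : ∑ k, -(b k) * αstar k
      = sSup {v : ℝ | ∃ α : K → ℝ, (∀ k, 0 ≤ α k) ∧
          (C + ∑ k, α k • A k).PosSemidef ∧ v = ∑ k, -(b k) * α k}) :
    sInf {v : ℝ | ∃ X : Matrix (Fin (2 * n)) (Fin (2 * n)) ℝ,
            X.IsSymm ∧ X.PosSemidef ∧ (∀ k, ip (A k) X ≤ b k) ∧ v = ip C X}
      = sInf (OPFSbarVals C A b l u (C + ∑ k, αstar k • A k)) ∧
    (∀ S : Matrix (Fin (2 * n)) (Fin (2 * n)) ℝ, S.IsSymm → S.PosSemidef →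
      sInf (OPFSbarVals C A b l u S)
        ≤ sInf {v : ℝ | ∃ X : Matrix (Fin (2 * n)) (Fin (2 * n)) ℝ,
            X.IsSymm ∧ X.PosSemidef ∧ (∀ k, ip (A k) X ≤ b k) ∧ v = ip C X}) := by
  classical
  obtain ⟨hu₀, rfl⟩ := pos_and_eq_neg_of_ballBounds hV hl hu
  have hbox : ∀ X : Matrix (Fin (2 * n)) (Fin (2 * n)) ℝ, X.PosSemidef →
      (∀ k, ip (A k) X ≤ b k) → ∀ i j, |X i j| ≤ u i * u j := fun X hX hXb i j =>
    hX.abs_apply_le (hu₀ i).le (hu₀ j).le (diag_le_sq_of_ball hball hb hu hX hXb i)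
      (diag_le_sq_of_ball hball hb hu hX hXb j)
  obtain ⟨x₀, hx₀⟩ := hfeas
  have hX₀ := posSemidef_vecMulVec_self x₀
  have hX₀b : ∀ k, ip (A k) (vecMulVec x₀ x₀) ≤ b k :=
    fun k => (ip_vecMulVec_self _ _).trans_le (hx₀ k)
  have hX₀s : (vecMulVec x₀ x₀).IsSymm := isHermitian_iff_isSymm.1 hX₀.isHermitian
  have hsdp : sInf (sdpVals C A b) = ∑ k, -(b k) * αstar k := by
    rw [hopt]
    refine csInf_sdpVals_eq_csSup_dualVals hC hA (fun k => Finset.sum_nonneg fun i _ => ?_)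
      ((sum_sum_ite_smul_eq_sum_comp e A).trans (by simp [hball, sum_ballMat]))
      hX₀ hX₀b hαstar hSstar
    split_ifs <;> norm_num
  have hle := fun (S : Matrix (Fin (2 * n)) (Fin (2 * n)) ℝ) (hS : S.PosSemidef) =>
    csInf_OPFSbarVals_le_csInf_sdpVals (C := C) hu₀ hbox ⟨_, _, hX₀s, hX₀, hX₀b, rfl⟩ hS
  refine ⟨le_antisymm ?_ (hle _ hSstar), fun S _ hS => hle S hS⟩
  exact hsdp.trans_le (le_csInf ⟨_, 0, _, hX₀s, hX₀b, mcCormick_neg_zero (hbox _ hX₀ hX₀b), rfl⟩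
    fun v hv => dual_obj_le_of_mem_OPFSbarVals hαstar hSstar hv)

/-- Proposition 2: under the ball-constraint assumption, if (OPF) is feasible
and `α*` is an optimal solution of (DSDP), then with `S* = C + Σ_k α*_k A_k` one has
`v(SDP) = v(ŌPF_{S*})`, and `v(ŌPF_S) ≤ v(SDP)` for every PSD `S`: `S*` maximizes
`v(ŌPF_S)` over PSD matrices `S`. -/
theorem stmt_12 {n : ℕ} (hn : 0 < n) {K : Type} [Fintype K]
    (C : Matrix (Fin (2 * n)) (Fin (2 * n)) ℝ) (hC : C.IsSymm)
    (A : K → Matrix (Fin (2 * n)) (Fin (2 * n)) ℝ) (hA : ∀ k, (A k).IsSymm)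
    (b : K → ℝ)
    (e : Fin n → K) (he : Function.Injective e)
    (V : Fin n → ℝ) (hV : ∀ i, 0 < V i)
    (hball : ∀ i : Fin n, A (e i) = ballMat n i)
    (hb : ∀ i : Fin n, b (e i) = (V i) ^ 2)
    (l u : Fin (2 * n) → ℝ)
    (hl : ∀ i : Fin n, l (idx1 n i) = -(V i) ∧ l (idx2 n i) = -(V i))
    (hu : ∀ i : Fin n, u (idx1 n i) = V i ∧ u (idx2 n i) = V i)
    (hfeas : ∃ x : Fin (2 * n) → ℝ, ∀ k, qf (A k) x ≤ b k)
    (αstar : K → ℝ) (hαstar : ∀ k, 0 ≤ αstar k)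
    (hSstar : (C + ∑ k, αstar k • A k).PosSemidef)
    (hopt : ∑ k, -(b k) * αstar k
      = sSup {v : ℝ | ∃ α : K → ℝ, (∀ k, 0 ≤ α k) ∧
          (C + ∑ k, α k • A k).PosSemidef ∧ v = ∑ k, -(b k) * α k}) :
    sInf {v : ℝ | ∃ X : Matrix (Fin (2 * n)) (Fin (2 * n)) ℝ,
            X.IsSymm ∧ X.PosSemidef ∧ (∀ k, ip (A k) X ≤ b k) ∧ v = ip C X}
      = sInf (OPFSbarVals C A b l u (C + ∑ k, αstar k • A k)) ∧
    (∀ S : Matrix (Fin (2 * n)) (Fin (2 * n)) ℝ, S.IsSymm → S.PosSemidef →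
      sInf (OPFSbarVals C A b l u S)
        ≤ sInf {v : ℝ | ∃ X : Matrix (Fin (2 * n)) (Fin (2 * n)) ℝ,
            X.IsSymm ∧ X.PosSemidef ∧ (∀ k, ip (A k) X ≤ b k) ∧ v = ip C X}) :=
  stmt_12_general C hC A hA b e V hV hball hb l u hl hu hfeas αstar hαstar hSstar hopt
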